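/- arXiv:1809.01861 — 2 statements merged into one kernel-verified Lean document; each statement's English description precedes it below -/
import Mathlib

section
/- For transitive permutation groups G ≤ S_m and H ≤ S_n, the generator index of the product group G × H acting on mn points equals max(n·gi(G), m·gi(H)), where gi denotes the generator index. -/
/-- The index of a permutation of a finite set of size `N`: `N` minus the number of its
disjoint cycles (fixed points counting as cycles). -/
noncomputable def permIndex {α : Type*} [Fintype α] (σ : Equiv.Perm α) : ℕ := by
  classical exact σ.cycleType.sum - σ.cycleType.card

/-- The generator index of a permutation group `G`: the minimum over all generating sets `S`
of `G` of the maximal index of an element of `S`. -/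
noncomputable def genIndex {α : Type*} [Fintype α] (G : Subgroup (Equiv.Perm α)) : ℕ :=
  sInf {k | ∃ S : Set (Equiv.Perm α), Subgroup.closure S = G ∧ ∀ σ ∈ S, permIndex σ ≤ k}

/-- The product action homomorphism `S_m × S_n →* S_{mn}`. -/
def prodPermHom (m n : ℕ) :
    Equiv.Perm (Fin m) × Equiv.Perm (Fin n) →* Equiv.Perm (Fin m × Fin n) where
  toFun p := Equiv.prodCongr p.1 p.2
  map_one' := Equiv.ext fun _ => rfl
  map_mul' _ _ := Equiv.ext fun _ => rfl


/-!
The index of `σ` is `N` minus the number of orbits of `⟨σ⟩`. Every orbit of `g × h` on `α × β`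
lies over an orbit of `g` and meets each fibre `{x} × β` over it, so `g × h` has at most `|β|`
times as many orbits as `g`, with equality for `g × 1`. Hence `ind (g × h) ≥ |β| · ind g`, with
equality for `g × 1`, and symmetrically in `h`. The generators `(g, 1)` and `(1, h)` built from
optimal generating sets of `G` and `H` give the upper bound; the coordinate projections of an
optimal generating set of `G × H` generate `G` and `H`, which gives the lower bound.
-/

open Equiv Finset

namespace Equiv.Perm

variable {α β : Type*}

noncomputable def numOrbits (σ : Perm α) : ℕ := Nat.card (Quotient (SameCycle.setoid σ))

section Fintype

variable [Fintype α] [DecidableEq α]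

def orbitLabel (σ : Perm α) (x : α) : Function.fixedPoints σ ⊕ σ.cycleFactorsFinset :=
  if hx : σ x = x then .inl ⟨x, hx⟩
  else .inr ⟨σ.cycleOf x, cycleOf_mem_cycleFactorsFinset_iff.2 (mem_support.2 hx)⟩

lemma orbitLabel_eq_orbitLabel_iff (σ : Perm α) {x y : α} :
    σ.orbitLabel x = σ.orbitLabel y ↔ σ.SameCycle x y := by
  unfold orbitLabel
  by_cases hx : σ x = x <;> by_cases hy : σ y = y
  · simp only [dif_pos hx, dif_pos hy, Sum.inl.injEq, Subtype.ext_iff]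
    exact ⟨fun h => h ▸ SameCycle.refl σ x, fun h => h.eq_of_left hx⟩
  · simp only [dif_pos hx, dif_neg hy, reduceCtorEq, false_iff]
    exact fun h => hy (h.eq_of_left hx ▸ hx)
  · simp only [dif_neg hx, dif_pos hy, reduceCtorEq, false_iff]
    exact fun h => hx (h.symm.eq_of_left hy ▸ hy)
  · simp only [dif_neg hx, dif_neg hy, Sum.inr.injEq, Subtype.mk.injEq]
    exact (sameCycle_iff_cycleOf_eq_of_mem_support (mem_support.2 hx) (mem_support.2 hy)).symm

lemma orbitLabel_surjective (σ : Perm α) : Function.Surjective σ.orbitLabel := by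
  rintro (⟨x, hx⟩ | ⟨c, hc⟩)
  · exact ⟨x, dif_pos hx⟩
  · obtain ⟨x, hxc⟩ := (mem_cycleFactorsFinset_iff.1 hc).1.nonempty_support
    have hx : σ x ≠ x := mem_support.1 (mem_cycleFactorsFinset_support_le hc hxc)
    exact ⟨x, by simp only [orbitLabel, dif_neg hx, cycle_is_cycleOf hxc hc]⟩

lemma numOrbits_eq (σ : Perm α) :
    σ.numOrbits = Fintype.card (Function.fixedPoints σ) + #σ.cycleFactorsFinset := by
  have hker : SameCycle.setoid σ = Setoid.ker σ.orbitLabel :=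
    Setoid.ext fun _ _ => (σ.orbitLabel_eq_orbitLabel_iff).symm
  rw [numOrbits, hker,
    Nat.card_congr (Setoid.quotientKerEquivOfSurjective _ σ.orbitLabel_surjective), Nat.card_sum, Nat.card_eq_fintype_card, Nat.card_eq_fintype_card, Fintype.card_coe]

lemma permIndex_eq (σ : Perm α) : permIndex σ = σ.cycleType.sum - σ.cycleType.card := by
  unfold permIndex
  congr!

end Fintype

lemma permIndex_add_numOrbits [Fintype α] (σ : Perm α) :
    permIndex σ + σ.numOrbits = Fintype.card α := by
  classical
  have hcard : Multiset.card σ.cycleType = #σ.cycleFactorsFinset := by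
    rw [cycleType_def, Multiset.card_map, Finset.card_val]
  have hcard_le : Multiset.card σ.cycleType ≤ σ.cycleType.sum := by
    simpa using Multiset.card_nsmul_le_sum (s := σ.cycleType) (a := 1)
      fun _ h => (one_lt_of_mem_cycleType h).le
  have hsum_le : σ.cycleType.sum ≤ Fintype.card α := sum_cycleType σ ▸ card_le_univ _
  rw [permIndex_eq, numOrbits_eq, card_fixedPoints, ← hcard]
  omega

def prodCongrHom (α β : Type*) : Perm α × Perm β →* Perm (α × β) where
  toFun p := prodCongr p.1 p.2
  map_one' := rfl
  map_mul' _ _ := rfl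

lemma prodCongr_zpow (g : Perm α) (h : Perm β) (k : ℤ) :
    prodCongr g h ^ k = prodCongr (g ^ k) (h ^ k) :=
  (map_zpow (prodCongrHom α β) (g, h) k).symm

lemma sameCycle_prodCongr_iff {g : Perm α} {h : Perm β} {p q : α × β} :
    SameCycle (prodCongr g h) p q ↔ ∃ k : ℤ, (g ^ k) p.1 = q.1 ∧ (h ^ k) p.2 = q.2 := by
  simp only [SameCycle, prodCongr_zpow, Prod.ext_iff, prodCongr_apply, Prod.map_fst, Prod.map_snd]

lemma prodCongrHom_injective [Nonempty α] [Nonempty β] :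
    Function.Injective (prodCongrHom α β) := by
  intro p q hpq
  obtain ⟨x⟩ := ‹Nonempty α›
  obtain ⟨y⟩ := ‹Nonempty β›
  exact Prod.ext (Equiv.ext fun a => congrArg Prod.fst (Equiv.ext_iff.1 hpq (a, y)))
    (Equiv.ext fun b => congrArg Prod.snd (Equiv.ext_iff.1 hpq (x, b)))

noncomputable def prodOrbitMk (g : Perm α) (h : Perm β)
    (p : Quotient (SameCycle.setoid g) × β) : Quotient (SameCycle.setoid (prodCongr g h)) :=
  ⟦(p.1.out, p.2)⟧

lemma prodOrbitMk_surjective (g : Perm α) (h : Perm β) :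
    Function.Surjective (prodOrbitMk g h) := by
  rintro ⟨x, y⟩
  obtain ⟨k, hk⟩ : g.SameCycle (⟦x⟧ : Quotient (SameCycle.setoid g)).out x :=
    Quotient.exact (Quotient.out_eq (s := SameCycle.setoid g) ⟦x⟧)
  refine ⟨(⟦x⟧, (h ^ k)⁻¹ y), Quotient.sound (sameCycle_prodCongr_iff.2 ⟨k, hk, ?_⟩)⟩
  simp

lemma prodOrbitMk_one_injective (g : Perm α) :
    Function.Injective (prodOrbitMk g (1 : Perm β)) := by
  rintro ⟨q, y⟩ ⟨q', y'⟩ hqq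
  obtain ⟨k, hk, hy⟩ := sameCycle_prodCongr_iff.1 (Quotient.exact hqq :
    SameCycle (prodCongr g 1) (q.out, y) (q'.out, y'))
  rw [one_zpow] at hy
  refine Prod.ext ?_ hy
  rw [← q.out_eq, ← q'.out_eq]
  exact Quotient.sound ⟨k, hk⟩

lemma numOrbits_prodCongr_le [Finite α] [Finite β] (g : Perm α) (h : Perm β) :
    numOrbits (prodCongr g h) ≤ g.numOrbits * Nat.card β := by
  rw [numOrbits, numOrbits, ← Nat.card_prod]
  exact Nat.card_le_card_of_surjective _ (prodOrbitMk_surjective g h)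

lemma numOrbits_prodCongr_one [Finite α] [Finite β] (g : Perm α) :
    numOrbits (prodCongr g (1 : Perm β)) = g.numOrbits * Nat.card β := by
  rw [numOrbits, numOrbits, ← Nat.card_prod]
  exact (Nat.card_eq_of_bijective _
    ⟨prodOrbitMk_one_injective g, prodOrbitMk_surjective g 1⟩).symm

lemma numOrbits_prodCongr_comm (g : Perm α) (h : Perm β) :
    numOrbits (prodCongr g h) = numOrbits (prodCongr h g) :=
  Nat.card_congr <| Quotient.congr (prodComm α β) fun _ _ => by
    change SameCycle _ _ _ ↔ SameCycle _ _ _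
    simp only [sameCycle_prodCongr_iff, prodComm_apply, Prod.fst_swap,
      Prod.snd_swap, and_comm]

section Fintype

variable [Fintype α] [Fintype β]

lemma permIndex_prodCongr_comm (g : Perm α) (h : Perm β) :
    permIndex (prodCongr g h) = permIndex (prodCongr h g) := by
  have hgh := permIndex_add_numOrbits (prodCongr g h)
  have hhg := permIndex_add_numOrbits (prodCongr h g)
  rw [Fintype.card_prod] at hgh hhg
  rw [numOrbits_prodCongr_comm] at hgh
  linarith

lemma card_mul_permIndex_le_permIndex_prodCongr (g : Perm α) (h : Perm β) :
    Fintype.card β * permIndex g ≤ permIndex (prodCongr g h) := by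
  have hg := permIndex_add_numOrbits g
  have hgh := permIndex_add_numOrbits (prodCongr g h)
  have hle := numOrbits_prodCongr_le g h
  rw [Fintype.card_prod] at hgh
  rw [Nat.card_eq_fintype_card] at hle
  nlinarith

lemma permIndex_prodCongr_one (g : Perm α) :
    permIndex (prodCongr g (1 : Perm β)) = Fintype.card β * permIndex g := by
  have hg := permIndex_add_numOrbits g
  have hg1 := permIndex_add_numOrbits (prodCongr g (1 : Perm β))
  rw [numOrbits_prodCongr_one, Nat.card_eq_fintype_card, Fintype.card_prod] at hg1
  nlinarith

end Fintype

end Equiv.Perm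

namespace Subgroup

variable {G N : Type*} [Group G] [Group N]

lemma map_fst_prod (H : Subgroup G) (K : Subgroup N) : (H.prod K).map (MonoidHom.fst G N) = H := by
  ext x
  simpa [mem_prod] using fun _ => ⟨1, K.one_mem⟩

lemma map_snd_prod (H : Subgroup G) (K : Subgroup N) : (H.prod K).map (MonoidHom.snd G N) = K := by
  ext x
  simpa [mem_prod] using fun _ => ⟨1, H.one_mem⟩

lemma closure_image_inl_union_image_inr (s : Set G) (t : Set N) :
    closure (MonoidHom.inl G N '' s ∪ MonoidHom.inr G N '' t) = (closure s).prod (closure t) := by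
  rw [closure_union, ← MonoidHom.map_closure, ← MonoidHom.map_closure]
  exact le_antisymm
    (sup_le (map_le_iff_le_comap.2 fun x hx => mem_prod.2 ⟨hx, one_mem _⟩)
      (map_le_iff_le_comap.2 fun y hy => mem_prod.2 ⟨one_mem _, hy⟩))
    (prod_le_iff.2 ⟨le_sup_left, le_sup_right⟩)

end Subgroup

open Equiv.Perm

section genIndex

variable {α β : Type*} [Fintype α] [Fintype β]

lemma permIndex_le_card (σ : Perm α) : permIndex σ ≤ Fintype.card α :=
  Nat.le.intro (permIndex_add_numOrbits σ)

lemma genIndex_le_of_closure_eq {G : Subgroup (Perm α)} {k : ℕ} (S : Set (Perm α))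
    (hS : Subgroup.closure S = G) (hk : ∀ σ ∈ S, permIndex σ ≤ k) : genIndex G ≤ k :=
  Nat.sInf_le ⟨S, hS, hk⟩

lemma exists_closure_eq_and_permIndex_le_genIndex (G : Subgroup (Perm α)) :
    ∃ S : Set (Perm α), Subgroup.closure S = G ∧ ∀ σ ∈ S, permIndex σ ≤ genIndex G :=
  Nat.sInf_mem (s := {k | ∃ S : Set (Perm α), Subgroup.closure S = G ∧ ∀ σ ∈ S, permIndex σ ≤ k})
    ⟨Fintype.card α, (G : Set (Perm α)), Subgroup.closure_eq G,
    fun σ _ => permIndex_le_card σ⟩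

lemma genIndex_eq_zero_of_isEmpty [IsEmpty α] (G : Subgroup (Perm α)) : genIndex G = 0 := by
  refine Nat.eq_zero_of_le_zero (genIndex_le_of_closure_eq ∅ ?_ (by simp))
  rw [Subgroup.closure_empty, eq_comm, Subgroup.eq_bot_iff_forall]
  exact fun _ _ => Subsingleton.elim _ _

/-- Since `φ` is injective, a generating set of `L.map φ` lifts to one of `L`, whose image under `ψ`
then generates `L.map ψ`. -/
lemma mul_genIndex_map_le_genIndex_map {M : Type*} [Group M] (L : Subgroup M)
    {φ : M →* Perm α} (hφ : Function.Injective φ) (ψ : M →* Perm β) {c : ℕ}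
    (hc : ∀ x, c * permIndex (ψ x) ≤ permIndex (φ x)) :
    c * genIndex (L.map ψ) ≤ genIndex (L.map φ) := by
  rcases Nat.eq_zero_or_pos c with rfl | hc0
  · simp
  obtain ⟨S, hS, hSk⟩ := exists_closure_eq_and_permIndex_le_genIndex (L.map φ)
  set T : Set M := L ∩ φ ⁻¹' S
  have hTS : φ '' T = S := by
    refine Set.Subset.antisymm (fun _ ⟨x, hx, hxσ⟩ => hxσ ▸ hx.2) fun σ hσ => ?_
    obtain ⟨x, hxL, rfl⟩ := Subgroup.mem_map.1 (hS ▸ Subgroup.subset_closure hσ)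
    exact ⟨x, ⟨hxL, hσ⟩, rfl⟩
  have hT : Subgroup.closure T = L := by
    apply Subgroup.map_injective hφ
    rw [MonoidHom.map_closure, hTS, hS]
  rw [mul_comm, ← Nat.le_div_iff_mul_le hc0]
  refine genIndex_le_of_closure_eq (ψ '' T) (by rw [← MonoidHom.map_closure, hT]) ?_
  rintro _ ⟨x, hxT, rfl⟩
  rw [Nat.le_div_iff_mul_le hc0, mul_comm]
  exact (hc x).trans (hSk _ hxT.2)

lemma genIndex_map_prodCongrHom_le (G : Subgroup (Perm α)) (H : Subgroup (Perm β)) :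
    genIndex ((G.prod H).map (prodCongrHom α β)) ≤
      max (Fintype.card β * genIndex G) (Fintype.card α * genIndex H) := by
  obtain ⟨SG, hSG, hSGk⟩ := exists_closure_eq_and_permIndex_le_genIndex G
  obtain ⟨SH, hSH, hSHk⟩ := exists_closure_eq_and_permIndex_le_genIndex H
  refine genIndex_le_of_closure_eq (prodCongrHom α β '' (MonoidHom.inl _ _ '' SG ∪ MonoidHom.inr _ _ '' SH))
    (by rw [← MonoidHom.map_closure, Subgroup.closure_image_inl_union_image_inr, hSG, hSH]) ?_
  rintro _ ⟨_, ⟨g, hg, rfl⟩ | ⟨h, hh, rfl⟩, rfl⟩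
  · refine le_max_of_le_left ?_
    change permIndex (prodCongr g 1) ≤ _
    rw [permIndex_prodCongr_one]
    exact Nat.mul_le_mul_left _ (hSGk g hg)
  · refine le_max_of_le_right ?_
    change permIndex (prodCongr 1 h) ≤ _
    rw [permIndex_prodCongr_comm, permIndex_prodCongr_one]
    exact Nat.mul_le_mul_left _ (hSHk h hh)

lemma genIndex_map_prodCongrHom [Nonempty α] [Nonempty β]
    (G : Subgroup (Perm α)) (H : Subgroup (Perm β)) :
    genIndex ((G.prod H).map (prodCongrHom α β)) =
      max (Fintype.card β * genIndex G) (Fintype.card α * genIndex H) := by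
  refine le_antisymm (genIndex_map_prodCongrHom_le G H) (max_le ?_ ?_)
  · simpa only [Subgroup.map_fst_prod] using
      mul_genIndex_map_le_genIndex_map (G.prod H) prodCongrHom_injective (MonoidHom.fst _ _)
        fun p => card_mul_permIndex_le_permIndex_prodCongr p.1 p.2
  · simpa only [Subgroup.map_snd_prod] using
      mul_genIndex_map_le_genIndex_map (G.prod H) prodCongrHom_injective (MonoidHom.snd _ _)
        fun p => permIndex_prodCongr_comm p.1 p.2 ▸ card_mul_permIndex_le_permIndex_prodCongr p.2 p.1

end genIndex

theorem genIndex_prod_general (m n : ℕ) (G : Subgroup (Equiv.Perm (Fin m)))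
    (H : Subgroup (Equiv.Perm (Fin n))) :
    genIndex (Subgroup.map (prodPermHom m n) (G.prod H)) =
      max (n * genIndex G) (m * genIndex H) := by
  rcases Nat.eq_zero_or_pos m with rfl | hm
  · simp [genIndex_eq_zero_of_isEmpty]
  rcases Nat.eq_zero_or_pos n with rfl | hn
  · simp [genIndex_eq_zero_of_isEmpty]
  have := Fin.pos_iff_nonempty.1 hm
  have := Fin.pos_iff_nonempty.1 hn
  have key := genIndex_map_prodCongrHom G H
  rw [Fintype.card_fin, Fintype.card_fin] at key
  exact key

/-- For transitive permutation groups `G ≤ S_m` and `H ≤ S_n`, the generator index of the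
product `G × H` in its product action on `m·n` points equals `max (n·gi G) (m·gi H)`. -/
theorem genIndex_prod (m n : ℕ) (G : Subgroup (Equiv.Perm (Fin m)))
    (H : Subgroup (Equiv.Perm (Fin n)))
    (hG : ∀ a b : Fin m, ∃ g ∈ G, g a = b) (hH : ∀ a b : Fin n, ∃ h ∈ H, h a = b) :
    genIndex (Subgroup.map (prodPermHom m n) (G.prod H)) =
      max (n * genIndex G) (m * genIndex H) :=
  genIndex_prod_general m n G H
end

section
/- Let G ≤ S_{2n} be a transitive imprimitive group preserving a system of n blocks of size 2, with generator index 2. Then the image of G under the projection to the action on the n blocks is the full symmetric group S_n. -/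
/-!
Every cycle has length at least 2, so a permutation of index at most 2 moves at most 4 points.
A block-preserving permutation moves both points of each block it moves, hence such a generator
moves at most two blocks: on the blocks it acts trivially or as a transposition. The image of `G`
on the blocks is therefore transitive and generated by transpositions, so it is the whole
symmetric group.
-/

/-- The imprimitive wreath product `C_2 ≀ S_n` of degree `2n`: the subgroup of all permutations
of `Fin n × Fin 2` preserving the partition into the `n` blocks `{i} × Fin 2` of size 2. -/
def blockSubgroup (n : ℕ) : Subgroup (Equiv.Perm (Fin n × Fin 2)) where
  carrier := {g | ∃ τ : Equiv.Perm (Fin n), ∀ p, (g p).1 = τ p.1}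
  one_mem' := ⟨1, fun _ => rfl⟩
  mul_mem' := by
    rintro a b ⟨τa, ha⟩ ⟨τb, hb⟩
    exact ⟨τa * τb, fun p => by simp [Equiv.Perm.mul_apply, ha, hb]⟩
  inv_mem' := by
    rintro g ⟨τ, h⟩
    refine ⟨τ⁻¹, fun p => ?_⟩
    have := h (g⁻¹ p)
    simp only [← Equiv.Perm.mul_apply, mul_inv_cancel, Equiv.Perm.one_apply] at this
    rw [this, ← Equiv.Perm.mul_apply, inv_mul_cancel, Equiv.Perm.one_apply]

/-- The base group `(C_2)^n` of the wreath product `C_2 ≀ S_n`: permutations fixing each block. -/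
def baseSubgroup (n : ℕ) : Subgroup (Equiv.Perm (Fin n × Fin 2)) where
  carrier := {g | ∀ p, (g p).1 = p.1}
  one_mem' := fun _ => rfl
  mul_mem' := by
    intro a b ha hb p
    rw [Equiv.Perm.mul_apply, ha, hb]
  inv_mem' := by
    intro g h p
    have := h (g⁻¹ p)
    simpa using this.symm

open Equiv Finset

section PermIndex

variable {α : Type*} [Fintype α] [DecidableEq α]

theorem permIndex_eq_card_support_sub (σ : Perm α) :
    permIndex σ = #σ.support - σ.cycleType.card := by
  unfold permIndex
  rw [← Perm.sum_cycleType]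
  congr!

theorem two_mul_card_cycleType_le (σ : Perm α) : 2 * σ.cycleType.card ≤ #σ.support := by
  rw [← Perm.sum_cycleType, mul_comm, ← smul_eq_mul]
  exact Multiset.card_nsmul_le_sum fun _ hk => Perm.two_le_of_mem_cycleType hk

theorem card_support_le_two_mul_permIndex (σ : Perm α) : #σ.support ≤ 2 * permIndex σ := by
  have := two_mul_card_cycleType_le σ
  rw [permIndex_eq_card_support_sub]
  omega

end PermIndex

theorem exists_closure_eq_of_genIndex_ne_zero {α : Type*} [Fintype α] {G : Subgroup (Perm α)}
    (hG : genIndex G ≠ 0) :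
    ∃ S : Set (Perm α), Subgroup.closure S = G ∧ ∀ σ ∈ S, permIndex σ ≤ genIndex G := by
  have hne : {k | ∃ S : Set (Perm α), Subgroup.closure S = G ∧ ∀ σ ∈ S, permIndex σ ≤ k}.Nonempty :=
    Set.nonempty_iff_ne_empty.mpr fun h => hG (by rw [genIndex, h, Nat.sInf_empty])
  exact Nat.sInf_mem hne

noncomputable def blockPerm (n : ℕ) : blockSubgroup n →* Perm (Fin n) :=
  MonoidHom.mk' (fun g => g.2.choose) fun a b => Perm.ext fun i => by
    have hab := (a * b).2.choose_spec (i, 0)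
    have ha := a.2.choose_spec (b.1 (i, 0))
    have hb := b.2.choose_spec (i, 0)
    rw [Perm.mul_apply, ← hb, ← ha, ← hab]
    rfl

theorem blockPerm_apply_fst {n : ℕ} (g : blockSubgroup n) (p : Fin n × Fin 2) :
    blockPerm n g p.1 = (g.1 p).1 :=
  (g.2.choose_spec p).symm

theorem two_mul_card_support_blockPerm_le {n : ℕ} (g : blockSubgroup n) :
    2 * #(blockPerm n g).support ≤ #g.1.support := by
  have hsub : (blockPerm n g).support ×ˢ univ ⊆ g.1.support := fun p hp =>
    Perm.mem_support.mpr fun hfix =>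
      Perm.mem_support.mp (mem_product.mp hp).1 (by rw [blockPerm_apply_fst g p, hfix])
  simpa [mul_comm] using card_le_card hsub

theorem blockPerm_eq_one_or_isSwap {n : ℕ} (g : blockSubgroup n) (hg : permIndex g.1 ≤ 2) :
    blockPerm n g = 1 ∨ (blockPerm n g).IsSwap := by
  have hcard :=
    (two_mul_card_support_blockPerm_le g).trans (card_support_le_two_mul_permIndex g.1)
  have hle : #(blockPerm n g).support ≤ 2 := by omega
  interval_cases h : #(blockPerm n g).support
  · exact Or.inl (Perm.card_support_eq_zero.mp h)
  · exact absurd h (Perm.card_support_ne_one _)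
  · exact Or.inr (Perm.card_support_eq_two.mp h)

/-- Let `G ≤ S_{2n}` be a transitive imprimitive group preserving a system of `n` blocks of
size 2, with generator index 2. Then the image of `G` in its action on the `n` blocks is the
full symmetric group `S_n`. -/
theorem blocks_image_eq_top (n : ℕ) (G : Subgroup (Equiv.Perm (Fin n × Fin 2)))
    (htrans : ∀ a b : Fin n × Fin 2, ∃ g ∈ G, g a = b)
    (hblocks : G ≤ blockSubgroup n)
    (hgi : genIndex G = 2) :
    ∀ τ : Equiv.Perm (Fin n), ∃ g ∈ G, ∀ p : Fin n × Fin 2, (g p).1 = τ p.1 := by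
  obtain ⟨S, rfl, hS⟩ := exists_closure_eq_of_genIndex_ne_zero (by rw [hgi]; exact two_ne_zero)
  let φ := (blockPerm n).comp (Subgroup.inclusion hblocks)
  let _ := MulAction.compHom (Fin n) φ
  have hφ (g : Subgroup.closure S) (p : Fin n × Fin 2) : φ g p.1 = (g.1 p).1 :=
    blockPerm_apply_fst _ p
  have : MulAction.IsPretransitive (Subgroup.closure S) (Fin n) := ⟨fun i j => by
    obtain ⟨g, hg, hgij⟩ := htrans (i, 0) (j, 0)
    exact ⟨⟨g, hg⟩, (hφ ⟨g, hg⟩ (i, 0)).trans (by rw [hgij])⟩⟩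
  have hperm (g : Subgroup.closure S) : MulAction.toPermHom _ (Fin n) g = φ g :=
    Perm.ext fun _ => rfl
  have hsurj := surjective_of_isSwap_of_isPretransitive' _
    (fun σ hσ => hperm σ ▸ blockPerm_eq_one_or_isSwap _ (hgi ▸ hS σ hσ))
    Subgroup.closure_closure_coe_preimage
  intro τ
  obtain ⟨g, hg⟩ := hsurj τ
  exact ⟨g, g.2, fun p => by rw [← hg, hperm, hφ]⟩
end
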